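/- Let σ = co({x_j}_{j=0}^n) ⊂ ℝ^n be a simplex with affinely independent vertices, let g : ℝ^n → ℝ^n be twice continuously differentiable on an open set containing σ, and let β ≥ 0 satisfy |∂²g^{(p)}/∂x^{(q)}∂x^{(r)}(ξ)| ≤ β for all ξ ∈ σ and all p, q, r. Let V : ℝ^n → ℝ be affine with gradient ∇V, let l ∈ ℝ^n satisfy l ≥ |∇V| entrywise, and let b₂ ∈ ℝ. Suppose V(x_j) ≥ 0 for every vertex and that at every vertex j the per-vertex inequality g(x_j)ᵀ∇V + c_j β 1_nᵀ l ≤ −b₂ V(x_j) holds. Then the Dini derivative of V along g satisfies D⁺V(x) ≤ −b₂ V(x) for every x ∈ σ. -/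

import Mathlib

/-!
Along `g` the Dini derivative of the affine function `V` at `y` is just `g(y) ⬝ ∇V`. Write `y` as a
convex combination `∑ αⱼ xⱼ` of the vertices. Second-order Taylor expansion about `x₀`, applied
at `y` and at every vertex, shows that each component of `g(y)` differs from the interpolant
`∑ αⱼ g(xⱼ)` by at most `β ∑ αⱼ cⱼ`: the Hessian bound turns into `|D²gₚ(ξ)(z, z)| ≤ nβ‖z‖²`, and
`‖y - x₀‖² ≤ (∑ αⱼ ‖xⱼ - x₀‖) · maxₖ ‖xₖ - x₀‖`. Pairing this error with `|∇V| ≤ l` and averaging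
the vertex inequalities with the weights `αⱼ` gives `-b₂ ∑ αⱼ V(xⱼ) = -b₂ V(y)`.
-/

open Filter Topology Set
open scoped BigOperators

/-- Second partial derivative `∂²φ/∂x^{(q)}∂x^{(r)}` of a scalar function on ℝⁿ. -/
noncomputable def secondPartial {n : ℕ} (φ : EuclideanSpace ℝ (Fin n) → ℝ) (q r : Fin n)
    (ξ : EuclideanSpace ℝ (Fin n)) : ℝ :=
  fderiv ℝ (fun y => fderiv ℝ φ y (EuclideanSpace.single r 1)) ξ (EuclideanSpace.single q 1)

/-- Dini derivative of `V` at `y` along the vector field `g`. -/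
noncomputable def diniDeriv {n : ℕ} (V : EuclideanSpace ℝ (Fin n) → ℝ)
    (g : EuclideanSpace ℝ (Fin n) → EuclideanSpace ℝ (Fin n))
    (y : EuclideanSpace ℝ (Fin n)) : EReal :=
  Filter.limsup (fun h : ℝ => (((V (y + h • g y) - V y) / h : ℝ) : EReal)) (𝓝[>] (0 : ℝ))

theorem abs_sub_sub_mul_le_of_abs_deriv2_le {ψ ψ₁ ψ₂ : ℝ → ℝ} {a b M : ℝ} (hab : a ≤ b)
    (hψ : ∀ t ∈ Icc a b, HasDerivAt ψ (ψ₁ t) t) (hψ₁ : ∀ t ∈ Icc a b, HasDerivAt ψ₁ (ψ₂ t) t)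
    (hM : ∀ t ∈ Icc a b, |ψ₂ t| ≤ M) :
    |ψ b - ψ a - ψ₁ a * (b - a)| ≤ M / 2 * (b - a) ^ 2 := by
  have hψ₁_lip : ∀ t ∈ Icc a b, ‖ψ₁ t - ψ₁ a‖ ≤ M * (t - a) :=
    norm_image_sub_le_of_norm_deriv_le_segment' (fun t ht => (hψ₁ t ht).hasDerivWithinAt)
      fun t ht => hM t (Ico_subset_Icc_self ht)
  have hrem : ∀ t ∈ Icc a b,
      HasDerivAt (fun t => ψ t - ψ a - ψ₁ a * (t - a)) (ψ₁ t - ψ₁ a) t := fun t ht =>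
    (((hψ t ht).sub_const (ψ a)).sub
      (((hasDerivAt_id t).sub_const a).const_mul (ψ₁ a))).congr_deriv (by ring)
  have hbound : ∀ t, HasDerivAt (fun t => M / 2 * (t - a) ^ 2) (M * (t - a)) t := fun t =>
    ((((hasDerivAt_id t).sub_const a).pow 2).const_mul (M / 2)).congr_deriv (by simp; ring)
  exact image_norm_le_of_norm_deriv_right_le_deriv_boundary
    (fun t ht => (hrem t ht).continuousAt.continuousWithinAt)
    (fun t ht => (hrem t (Ico_subset_Icc_self ht)).hasDerivWithinAt) (by simp) hbound
    (fun t ht => hψ₁_lip t (Ico_subset_Icc_self ht)) (right_mem_Icc.2 hab)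

theorem abs_sub_sub_fderiv_le_of_hessian_le {E : Type*} [NormedAddCommGroup E]
    [NormedSpace ℝ E] {φ : E → ℝ} {a b : E} {M : ℝ}
    (hφ : ∀ ξ ∈ segment ℝ a b, ContDiffAt ℝ 2 φ ξ)
    (hM : ∀ ξ ∈ segment ℝ a b, |fderiv ℝ (fderiv ℝ φ) ξ (b - a) (b - a)| ≤ M) :
    |φ b - φ a - fderiv ℝ φ a (b - a)| ≤ M / 2 := by
  set γ : ℝ → E := fun t => a + t • (b - a)
  have hγ : ∀ t ∈ Icc (0 : ℝ) 1, γ t ∈ segment ℝ a b := fun t ht =>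
    (convex_segment a b).add_smul_sub_mem (left_mem_segment ℝ a b) (right_mem_segment ℝ a b) ht
  have hγ' : ∀ t, HasDerivAt γ (b - a) t := fun t => by
    simpa [γ] using ((hasDerivAt_id t).smul_const (b - a)).const_add a
  have hψ : ∀ t ∈ Icc (0 : ℝ) 1,
      HasDerivAt (fun t => φ (γ t)) (fderiv ℝ φ (γ t) (b - a)) t := fun t ht =>
    ((hφ _ (hγ t ht)).differentiableAt two_ne_zero).hasFDerivAt.comp_hasDerivAt t (hγ' t)
  have hψ₁ : ∀ t ∈ Icc (0 : ℝ) 1, HasDerivAt (fun t => fderiv ℝ φ (γ t) (b - a))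
      (fderiv ℝ (fderiv ℝ φ) (γ t) (b - a) (b - a)) t := fun t ht => by
    have hD : DifferentiableAt ℝ (fderiv ℝ φ) (γ t) :=
      ((hφ _ (hγ t ht)).fderiv_right (m := 1) le_rfl).differentiableAt one_ne_zero
    exact (ContinuousLinearMap.apply ℝ ℝ (b - a)).hasFDerivAt.comp_hasDerivAt t
      (hD.hasFDerivAt.comp_hasDerivAt t (hγ' t))
  simpa [γ] using abs_sub_sub_mul_le_of_abs_deriv2_le zero_le_one hψ hψ₁
    fun t ht => hM _ (hγ t ht)

theorem abs_apply_self_le_of_abs_apply_single_le {ι : Type*} [Fintype ι] [DecidableEq ι]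
    (B : EuclideanSpace ℝ ι →L[ℝ] EuclideanSpace ℝ ι →L[ℝ] ℝ) {β : ℝ} (hβ0 : 0 ≤ β)
    (hB : ∀ q r, |B (EuclideanSpace.single q 1) (EuclideanSpace.single r 1)| ≤ β)
    (z : EuclideanSpace ℝ ι) :
    |B z z| ≤ β * (Fintype.card ι * ‖z‖ ^ 2) := by
  have hz : z = ∑ i, z i • EuclideanSpace.single i (1 : ℝ) := by
    simpa using ((EuclideanSpace.basisFun ι ℝ).sum_repr z).symm
  have hexpand : B z z = ∑ r, ∑ q, z r * (z q * B (EuclideanSpace.single q 1)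
      (EuclideanSpace.single r 1)) := by
    conv_lhs => rw [hz]
    simp only [map_sum, map_smul, FunLike.coe_sum, FunLike.coe_smul, Finset.sum_apply,
      Pi.smul_apply, smul_eq_mul, Finset.mul_sum]
  calc |B z z| ≤ ∑ r, ∑ q, |z r| * (|z q| * β) := by
        rw [hexpand]
        refine (Finset.abs_sum_le_sum_abs _ _).trans (Finset.sum_le_sum fun r _ => ?_)
        refine (Finset.abs_sum_le_sum_abs _ _).trans (Finset.sum_le_sum fun q _ => ?_)
        rw [abs_mul, abs_mul]
        gcongr
        exact hB q r
    _ = β * (∑ i, |z i|) ^ 2 := by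
        simp only [← Finset.sum_mul, ← Finset.mul_sum]
        ring
    _ ≤ β * (Fintype.card ι * ‖z‖ ^ 2) := by
        gcongr
        simpa [PiLp.norm_sq_eq_of_L2, sq_abs] using
          sq_sum_le_card_mul_sum_sq (s := Finset.univ) (f := fun i => |z i|)

theorem secondPartial_eq_fderiv_fderiv {n : ℕ} {φ : EuclideanSpace ℝ (Fin n) → ℝ}
    {ξ : EuclideanSpace ℝ (Fin n)} (hφ : DifferentiableAt ℝ (fderiv ℝ φ) ξ) (q r : Fin n) :
    secondPartial φ q r ξ =
      fderiv ℝ (fderiv ℝ φ) ξ (EuclideanSpace.single q 1) (EuclideanSpace.single r 1) := by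
  rw [secondPartial, fderiv_clm_apply hφ (differentiableAt_const _)]
  simp

theorem exists_mem_stdSimplex_sum_smul_eq {ι : Type*} [Fintype ι] {V : Type*} [AddCommGroup V]
    [Module ℝ V] {x : ι → V} {y : V} (hy : y ∈ convexHull ℝ (range x)) :
    ∃ α ∈ stdSimplex ℝ ι, ∑ j, α j • x j = y := by
  classical
  have hrange : range x = Fintype.linearCombination ℝ x '' range fun i ↦ Pi.single i 1 := by
    rw [← range_comp]
    congr 1
    funext i
    simp
  rw [hrange, ← LinearMap.image_convexHull, convexHull_rangle_single_eq_stdSimplex] at hy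
  obtain ⟨α, hα, rfl⟩ := hy
  exact ⟨α, hα, rfl⟩

theorem abs_sub_sum_mul_le_of_abs_remainder_le {ι E : Type*} [Fintype ι] [AddCommGroup E]
    [Module ℝ E] {φ : E → ℝ} (L : E →ₗ[ℝ] ℝ) {R : E → ℝ} (a : E) {x : ι → E} {α : ι → ℝ}
    (hα : α ∈ stdSimplex ℝ ι)
    (hRy : |φ (∑ j, α j • x j) - φ a - L (∑ j, α j • x j - a)| ≤ R (∑ j, α j • x j))
    (hRx : ∀ j, |φ (x j) - φ a - L (x j - a)| ≤ R (x j)) :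
    |φ (∑ j, α j • x j) - ∑ j, α j * φ (x j)| ≤ R (∑ j, α j • x j) + ∑ j, α j * R (x j) := by
  set y := ∑ j, α j • x j
  have hlin : ∑ j, α j * L (x j - a) = L (y - a) := by
    simp only [y, ← smul_eq_mul, ← map_smul, ← map_sum, smul_sub, Finset.sum_sub_distrib,
      ← Finset.sum_smul, hα.2, one_smul]
  have hsplit : φ y - ∑ j, α j * φ (x j) =
      (φ y - φ a - L (y - a)) - ∑ j, α j * (φ (x j) - φ a - L (x j - a)) := by
    simp only [mul_sub, Finset.sum_sub_distrib, ← Finset.sum_mul, hα.2, hlin]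
    ring
  rw [hsplit]
  refine (abs_sub _ _).trans (add_le_add hRy ?_)
  refine (Finset.abs_sum_le_sum_abs _ _).trans (Finset.sum_le_sum fun j _ => ?_)
  rw [abs_mul, abs_of_nonneg (hα.1 j)]
  exact mul_le_mul_of_nonneg_left (hRx j) (hα.1 j)

theorem sq_norm_sum_smul_sub_add_sum_le {ι E : Type*} [Fintype ι] [SeminormedAddCommGroup E]
    [NormedSpace ℝ E] {x : ι → E} {α : ι → ℝ} (hα : α ∈ stdSimplex ℝ ι) (a : E) {h : ℝ}
    (hh : ∀ j, ‖x j - a‖ ≤ h) :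
    ‖∑ j, α j • x j - a‖ ^ 2 + ∑ j, α j * ‖x j - a‖ ^ 2 ≤
      ∑ j, α j * (‖x j - a‖ * (h + ‖x j - a‖)) := by
  set S := ∑ j, α j * ‖x j - a‖
  have hy : ‖∑ j, α j • x j - a‖ ≤ S := by
    have : ∑ j, α j • x j - a = ∑ j, α j • (x j - a) := by
      simp only [smul_sub, Finset.sum_sub_distrib, ← Finset.sum_smul, hα.2, one_smul]
    rw [this]
    refine (norm_sum_le _ _).trans (le_of_eq (Finset.sum_congr rfl fun j _ => ?_))
    rw [norm_smul, Real.norm_of_nonneg (hα.1 j)]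
  have hS : S ≤ h := by
    calc S ≤ ∑ j, α j * h := Finset.sum_le_sum fun j _ => mul_le_mul_of_nonneg_left (hh j) (hα.1 j)
      _ = h := by rw [← Finset.sum_mul, hα.2, one_mul]
  have hS0 : 0 ≤ S := Finset.sum_nonneg fun j _ => mul_nonneg (hα.1 j) (norm_nonneg _)
  have : ∑ j, α j * (‖x j - a‖ * (h + ‖x j - a‖)) = S * h + ∑ j, α j * ‖x j - a‖ ^ 2 := by
    simp only [S, Finset.sum_mul, ← Finset.sum_add_distrib]
    exact Finset.sum_congr rfl fun j _ => by ring
  rw [this]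
  gcongr
  nlinarith [norm_nonneg (∑ j, α j • x j - a)]

theorem norm_sub_zero_le_iSup_succ {E : Type*} [SeminormedAddCommGroup E] {n : ℕ}
    (x : Fin (n + 1) → E) (j : Fin (n + 1)) : ‖x j - x 0‖ ≤ ⨆ k : Fin n, ‖x k.succ - x 0‖ := by
  induction j using Fin.cases with
  | zero => simpa using Real.iSup_nonneg fun k : Fin n => norm_nonneg (x k.succ - x 0)
  | succ k => exact le_ciSup (f := fun k : Fin n => ‖x k.succ - x 0‖) (finite_range _).bddAbove k

theorem abs_sub_sum_mul_le_of_abs_secondPartial_le {ι : Type*} [Fintype ι] {n : ℕ}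
    {φ : EuclideanSpace ℝ (Fin n) → ℝ} {s : Set (EuclideanSpace ℝ (Fin n))} (hs : Convex ℝ s)
    {x : ι → EuclideanSpace ℝ (Fin n)} {a : EuclideanSpace ℝ (Fin n)} (ha : a ∈ s)
    (hx : ∀ j, x j ∈ s) (hφ : ∀ ξ ∈ s, ContDiffAt ℝ 2 φ ξ) {β : ℝ} (hβ0 : 0 ≤ β)
    (hβ : ∀ ξ ∈ s, ∀ q r, |secondPartial φ q r ξ| ≤ β) {α : ι → ℝ} (hα : α ∈ stdSimplex ℝ ι)
    {h : ℝ} (hh : ∀ j, ‖x j - a‖ ≤ h) :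
    |φ (∑ j, α j • x j) - ∑ j, α j * φ (x j)| ≤
      β * ∑ j, α j * ((n : ℝ) / 2 * ‖x j - a‖ * (h + ‖x j - a‖)) := by
  have hhess : ∀ ξ ∈ s, ∀ z, |fderiv ℝ (fderiv ℝ φ) ξ z z| ≤ β * (n * ‖z‖ ^ 2) := by
    intro ξ hξ z
    have hD := ((hφ ξ hξ).fderiv_right (m := 1) le_rfl).differentiableAt one_ne_zero
    simpa using abs_apply_self_le_of_abs_apply_single_le _ hβ0
      (fun q r => secondPartial_eq_fderiv_fderiv hD q r ▸ hβ ξ hξ q r) z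
  have htaylor : ∀ b ∈ s, |φ b - φ a - fderiv ℝ φ a (b - a)| ≤ β * (n * ‖b - a‖ ^ 2) / 2 :=
    fun b hb => abs_sub_sub_fderiv_le_of_hessian_le
      (fun ξ hξ => hφ ξ (hs.segment_subset ha hb hξ))
      (fun ξ hξ => hhess ξ (hs.segment_subset ha hb hξ) _)
  have hy : ∑ j, α j • x j ∈ s := hs.sum_mem (fun j _ => hα.1 j) hα.2 fun j _ => hx j
  calc _ ≤ β * (n * ‖∑ j, α j • x j - a‖ ^ 2) / 2 + ∑ j, α j * (β * (n * ‖x j - a‖ ^ 2) / 2) :=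
        abs_sub_sum_mul_le_of_abs_remainder_le (fderiv ℝ φ a : _ →ₗ[ℝ] ℝ)
          (R := fun b => β * (n * ‖b - a‖ ^ 2) / 2) a hα
          (htaylor _ hy) fun j => htaylor _ (hx j)
    _ = β * n / 2 * (‖∑ j, α j • x j - a‖ ^ 2 + ∑ j, α j * ‖x j - a‖ ^ 2) := by
        rw [mul_add, Finset.mul_sum]
        congr 1
        · ring
        · exact Finset.sum_congr rfl fun j _ => by ring
    _ ≤ β * n / 2 * ∑ j, α j * (‖x j - a‖ * (h + ‖x j - a‖)) := by
        gcongr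
        exact sq_norm_sum_smul_sub_add_sum_le hα a hh
    _ = _ := by
        rw [Finset.mul_sum, Finset.mul_sum]
        exact Finset.sum_congr rfl fun j _ => by ring

theorem diniDeriv_eq_of_affine {n : ℕ} {V : EuclideanSpace ℝ (Fin n) → ℝ} {gradV : Fin n → ℝ}
    {ω : ℝ} (hV : ∀ y, V y = ∑ i, gradV i * y i + ω)
    (g : EuclideanSpace ℝ (Fin n) → EuclideanSpace ℝ (Fin n)) (y : EuclideanSpace ℝ (Fin n)) :
    diniDeriv V g y = ((∑ i, g y i * gradV i : ℝ) : EReal) := by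
  have hslope : ∀ᶠ h in 𝓝[>] (0 : ℝ),
      (((V (y + h • g y) - V y) / h : ℝ) : EReal) = ((∑ i, g y i * gradV i : ℝ) : EReal) := by
    filter_upwards [self_mem_nhdsWithin] with h (hh : 0 < h)
    congr 1
    rw [div_eq_iff hh.ne', hV, hV, Finset.sum_mul]
    simp only [PiLp.add_apply, PiLp.smul_apply, smul_eq_mul]
    rw [add_sub_add_right_eq_sub, ← Finset.sum_sub_distrib]
    exact Finset.sum_congr rfl fun i _ => by ring
  rw [diniDeriv, limsup_congr hslope, limsup_const]

theorem affine_apply_sum_smul {ι : Type*} [Fintype ι] {n : ℕ} {V : EuclideanSpace ℝ (Fin n) → ℝ}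
    {gradV : Fin n → ℝ} {ω : ℝ} (hV : ∀ y, V y = ∑ i, gradV i * y i + ω)
    (x : ι → EuclideanSpace ℝ (Fin n)) {α : ι → ℝ} (hα : ∑ j, α j = 1) :
    V (∑ j, α j • x j) = ∑ j, α j * V (x j) := by
  simp only [hV, mul_add, Finset.sum_add_distrib, ← Finset.sum_mul, hα, one_mul, Finset.mul_sum,
    WithLp.ofLp_sum, WithLp.ofLp_smul, Finset.sum_apply, Pi.smul_apply, smul_eq_mul]
  rw [Finset.sum_comm]
  congr 1
  exact Finset.sum_congr rfl fun i _ => Finset.sum_congr rfl fun j _ => by ring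

theorem sum_mul_le_sum_mul_add_of_abs_sub_le {ι : Type*} [Fintype ι] {u v w l : ι → ℝ} {ε : ℝ}
    (hε : ∀ i, |u i - v i| ≤ ε) (hl : ∀ i, |w i| ≤ l i) :
    ∑ i, u i * w i ≤ ∑ i, v i * w i + ε * ∑ i, l i := by
  rw [Finset.mul_sum, ← Finset.sum_add_distrib]
  refine Finset.sum_le_sum fun i _ => ?_
  calc u i * w i = v i * w i + (u i - v i) * w i := by ring
    _ ≤ v i * w i + |u i - v i| * |w i| :=
        add_le_add_right ((le_abs_self _).trans (abs_mul _ _).le) _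
    _ ≤ v i * w i + ε * l i := by
        gcongr
        · exact (abs_nonneg _).trans (hε i)
        · exact hε i
        · exact hl i

theorem stmt2_general (n : ℕ)
    (x : Fin (n + 1) → EuclideanSpace ℝ (Fin n))
    (g : EuclideanSpace ℝ (Fin n) → EuclideanSpace ℝ (Fin n))
    (U : Set (EuclideanSpace ℝ (Fin n))) (hU : IsOpen U)
    (hσU : convexHull ℝ (Set.range x) ⊆ U)
    (hg : ContDiffOn ℝ 2 g U)
    (β : ℝ) (hβ0 : 0 ≤ β)
    (hβ : ∀ ξ ∈ convexHull ℝ (Set.range x), ∀ p q r : Fin n,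
      |secondPartial (fun y => g y p) q r ξ| ≤ β)
    (V : EuclideanSpace ℝ (Fin n) → ℝ) (gradV : Fin n → ℝ) (ω : ℝ)
    (hV : ∀ y, V y = (∑ i, gradV i * y i) + ω)
    (l : Fin n → ℝ) (hl : ∀ i, |gradV i| ≤ l i)
    (c : Fin (n + 1) → ℝ)
    (hc : ∀ j, c j = ((n : ℝ) / 2) * ‖x j - x 0‖ *
      ((⨆ k : Fin n, ‖x k.succ - x 0‖) + ‖x j - x 0‖))
    (b₂ : ℝ)
    (hvert : ∀ j, (∑ i, g (x j) i * gradV i) + c j * β * (∑ i, l i) ≤ -b₂ * V (x j)) :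
    ∀ y ∈ convexHull ℝ (Set.range x), diniDeriv V g y ≤ ((-b₂ * V y : ℝ) : EReal) := by
  intro y hy
  obtain ⟨α, hα, rfl⟩ := exists_mem_stdSimplex_sum_smul_eq hy
  have hxσ : ∀ j, x j ∈ convexHull ℝ (range x) := fun j => subset_convexHull ℝ _ (mem_range_self j)
  have herr : ∀ p, |g (∑ j, α j • x j) p - ∑ j, α j * g (x j) p| ≤ β * ∑ j, α j * c j := by
    intro p
    simp only [hc]
    exact abs_sub_sum_mul_le_of_abs_secondPartial_le (convex_convexHull ℝ _) (hxσ 0) hxσ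
      (fun ξ hξ => (EuclideanSpace.proj p).contDiff.contDiffAt.comp ξ
        (hg.contDiffAt (hU.mem_nhds (hσU hξ))))
      hβ0 (fun ξ hξ => hβ ξ hξ p) hα (norm_sub_zero_le_iSup_succ x)
  rw [diniDeriv_eq_of_affine hV, affine_apply_sum_smul hV x hα.2, EReal.coe_le_coe_iff]
  calc ∑ i, g (∑ j, α j • x j) i * gradV i
      ≤ ∑ i, (∑ j, α j * g (x j) i) * gradV i + (β * ∑ j, α j * c j) * ∑ i, l i :=
        sum_mul_le_sum_mul_add_of_abs_sub_le herr hl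
    _ = ∑ j, α j * ((∑ i, g (x j) i * gradV i) + c j * β * ∑ i, l i) := by
        simp only [Finset.sum_mul, Finset.mul_sum, mul_add, Finset.sum_add_distrib]
        congr 1 <;> rw [Finset.sum_comm] <;>
          exact Finset.sum_congr rfl fun j _ => Finset.sum_congr rfl fun i _ => by ring
    _ ≤ ∑ j, α j * (-b₂ * V (x j)) :=
        Finset.sum_le_sum fun j _ => mul_le_mul_of_nonneg_left (hvert j) (hα.1 j)
    _ = -b₂ * ∑ j, α j * V (x j) := by
        rw [Finset.mul_sum]
        exact Finset.sum_congr rfl fun j _ => by ring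

/-- per-vertex decrease conditions imply `D⁺V(x) ≤ −b₂ V(x)` on the simplex. -/
theorem stmt2 (n : ℕ)
    (x : Fin (n + 1) → EuclideanSpace ℝ (Fin n))
    (hx : LinearIndependent ℝ (fun j : Fin n => x j.succ - x 0))
    (g : EuclideanSpace ℝ (Fin n) → EuclideanSpace ℝ (Fin n))
    (U : Set (EuclideanSpace ℝ (Fin n))) (hU : IsOpen U)
    (hσU : convexHull ℝ (Set.range x) ⊆ U)
    (hg : ContDiffOn ℝ 2 g U)
    (β : ℝ) (hβ0 : 0 ≤ β)
    (hβ : ∀ ξ ∈ convexHull ℝ (Set.range x), ∀ p q r : Fin n,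
      |secondPartial (fun y => g y p) q r ξ| ≤ β)
    (V : EuclideanSpace ℝ (Fin n) → ℝ) (gradV : Fin n → ℝ) (ω : ℝ)
    (hV : ∀ y, V y = (∑ i, gradV i * y i) + ω)
    (l : Fin n → ℝ) (hl : ∀ i, |gradV i| ≤ l i)
    (c : Fin (n + 1) → ℝ)
    (hc : ∀ j, c j = ((n : ℝ) / 2) * ‖x j - x 0‖ *
      ((⨆ k : Fin n, ‖x k.succ - x 0‖) + ‖x j - x 0‖))
    (b₂ : ℝ)
    (hVpos : ∀ j, 0 ≤ V (x j))
    (hvert : ∀ j, (∑ i, g (x j) i * gradV i) + c j * β * (∑ i, l i) ≤ -b₂ * V (x j)) :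
    ∀ y ∈ convexHull ℝ (Set.range x), diniDeriv V g y ≤ ((-b₂ * V y : ℝ) : EReal) :=
  stmt2_general n x g U hU hσU hg β hβ0 hβ V gradV ω hV l hl c hc b₂ hvert
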